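/- arXiv:2602.13525 — 2 statements merged into one kernel-verified Lean document; each statement's English description precedes it below -/
import Mathlib

section
/- Let Ω ⊂ ℝⁿ be a bounded domain, a ∈ C²(Ω̄) nonnegative with |∇a|² ≤ C₀ a on Ω (which follows from |∇a|⁴ ≤ M a³ and boundedness of a). Then for every u, w ∈ H²₀(Ω) ∩ H⁴(Ω), one has the identity ∫_Ω a|D²(u+w)|² dx = −∫_Ω D²(ū+w̄)(∇a, ∇(u+w)) dx + ∫_Ω (∇a·∇(u+w)) Δ(ū+w̄) dx + ∫_Ω a|Δ(u+w)|² dx, and consequently ∫_Ω a|D²(u+w)|² dx ≤ C₀' (‖Δu‖₂ + ‖Δw‖₂)(∫_Ω a|∇(u+w)|² dx)^{1/2} + ∫_Ω a|Δ(u+w)|² dx. -/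
open MeasureTheory

/-- Partial derivative in the `i`-th coordinate direction. -/
noncomputable def pd {n : ℕ} (f : EuclideanSpace ℝ (Fin n) → ℝ) (i : Fin n) :
    EuclideanSpace ℝ (Fin n) → ℝ :=
  fun x => fderiv ℝ f x (EuclideanSpace.single i 1)

/-- Laplacian. -/
noncomputable def lap {n : ℕ} (f : EuclideanSpace ℝ (Fin n) → ℝ) :
    EuclideanSpace ℝ (Fin n) → ℝ :=
  fun x => ∑ i, pd (pd f i) i x

variable {n : ℕ}

lemma pd_cont {f : EuclideanSpace ℝ (Fin n) → ℝ} (hf : ContDiff ℝ 1 f) (i : Fin n) :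
    Continuous (pd f i) :=
  (hf.continuous_fderiv one_ne_zero).clm_apply continuous_const

lemma pd_smooth {f : EuclideanSpace ℝ (Fin n) → ℝ} (hf : ContDiff ℝ (⊤ : ℕ∞) f) (i : Fin n) :
    ContDiff ℝ (⊤ : ℕ∞) (pd f i) :=
  (hf.fderiv_right (by simp)).clm_apply contDiff_const

lemma pd_hcs {f : EuclideanSpace ℝ (Fin n) → ℝ} (hf : HasCompactSupport f) (i : Fin n) :
    HasCompactSupport (pd f i) :=
  hf.fderiv_apply ℝ (EuclideanSpace.single i 1)

lemma pd_eq_zero {f : EuclideanSpace ℝ (Fin n) → ℝ} {x : EuclideanSpace ℝ (Fin n)}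
    (hx : x ∉ tsupport f) (i : Fin n) : pd f i x = 0 := by
  have : fderiv ℝ f x = 0 := by
    by_contra h
    exact hx (support_fderiv_subset ℝ (by simpa [Function.mem_support] using h))
  simp [pd, this]

lemma tsupport_pd_subset {f : EuclideanSpace ℝ (Fin n) → ℝ} (i : Fin n) :
    tsupport (pd f i) ⊆ tsupport f := by
  apply closure_minimal _ (isClosed_tsupport f)
  intro x hx
  by_contra h
  exact hx (pd_eq_zero h i)

lemma pd_mul {f g : EuclideanSpace ℝ (Fin n) → ℝ} {x : EuclideanSpace ℝ (Fin n)}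
    (hf : DifferentiableAt ℝ f x) (hg : DifferentiableAt ℝ g x) (i : Fin n) :
    pd (fun y => f y * g y) i x = pd f i x * g x + f x * pd g i x := by
  simp only [pd, fderiv_fun_mul hf hg]
  simp only [ContinuousLinearMap.add_apply, ContinuousLinearMap.smul_apply, smul_eq_mul]
  ring

lemma pd_add {f g : EuclideanSpace ℝ (Fin n) → ℝ} {x : EuclideanSpace ℝ (Fin n)}
    (hf : DifferentiableAt ℝ f x) (hg : DifferentiableAt ℝ g x) (i : Fin n) :
    pd (fun y => f y + g y) i x = pd f i x + pd g i x := by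
  simp only [pd, fderiv_fun_add hf hg]; simp

lemma pd_const {c : ℝ} (i : Fin n) (x : EuclideanSpace ℝ (Fin n)) :
    pd (fun _ => c) i x = 0 := by
  simp [pd, fderiv_const_apply]

lemma pd_comm {f : EuclideanSpace ℝ (Fin n) → ℝ} (hf : ContDiff ℝ (⊤ : ℕ∞) f)
    (k l : Fin n) (x : EuclideanSpace ℝ (Fin n)) :
    pd (pd f k) l x = pd (pd f l) k x := by
  have hd : DifferentiableAt ℝ (fderiv ℝ f) x :=
    ((hf.fderiv_right (m := 1) (WithTop.coe_le_coe.mpr le_top)).differentiable one_ne_zero).differentiableAt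
  have h2 : ∀ v : EuclideanSpace ℝ (Fin n),
      fderiv ℝ (fun y => fderiv ℝ f y v) x = (fderiv ℝ (fderiv ℝ f) x).flip v := by
    intro v
    rw [fderiv_clm_apply hd (differentiableAt_const v)]
    simp
  have hsymm : ∀ v w, fderiv ℝ (fderiv ℝ f) x v w = fderiv ℝ (fderiv ℝ f) x w v := by
    intro v w
    exact second_derivative_symmetric (f := f) (f' := fderiv ℝ f)
      (fun y => ((hf.differentiable (by simp)) y).hasFDerivAt) hd.hasFDerivAt v w
  show fderiv ℝ (fun y => fderiv ℝ f y (EuclideanSpace.single k 1)) x (EuclideanSpace.single l 1)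
      = fderiv ℝ (fun y => fderiv ℝ f y (EuclideanSpace.single l 1)) x (EuclideanSpace.single k 1)
  rw [h2, h2]
  exact hsymm _ _

-- Lipschitz

lemma lip_of_c1 {f : EuclideanSpace ℝ (Fin n) → ℝ} (hf : ContDiff ℝ 1 f)
    (h2 : HasCompactSupport f) : ∃ C : NNReal, LipschitzWith C f := by
  obtain ⟨C, hC⟩ := (h2.fderiv ℝ).exists_bound_of_continuous (hf.continuous_fderiv one_ne_zero)
  refine ⟨C.toNNReal, lipschitzWith_of_nnnorm_fderiv_le (hf.differentiable one_ne_zero) fun x => ?_⟩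
  have := hC x
  rw [← NNReal.coe_le_coe]
  simp only [coe_nnnorm]
  exact le_trans this (Real.le_coe_toNNReal C)

lemma integral_pd_eq_zero {f : EuclideanSpace ℝ (Fin n) → ℝ} (hf : ContDiff ℝ 1 f)
    (h2 : HasCompactSupport f) (i : Fin n) : ∫ x, pd f i x = 0 := by
  obtain ⟨C, hC⟩ := lip_of_c1 hf h2
  have h1 : LipschitzWith 0 (fun _ : EuclideanSpace ℝ (Fin n) => (1:ℝ)) := LipschitzWith.const 1
  have := LipschitzWith.integral_lineDeriv_mul_eq (μ := volume) h1 hC h2 (EuclideanSpace.single i 1)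
  have hconst : ∀ (x : EuclideanSpace ℝ (Fin n)) v,
      lineDeriv ℝ (fun _ : EuclideanSpace ℝ (Fin n) => (1:ℝ)) x v = 0 := by
    intro x v
    have : HasLineDerivAt ℝ (fun _ : EuclideanSpace ℝ (Fin n) => (1:ℝ)) 0 x v := by
      simpa [HasLineDerivAt] using hasDerivAt_const (0:ℝ) (1:ℝ)
    exact this.lineDeriv
  simp only [hconst, zero_mul, integral_zero, mul_one] at this
  have heq : ∀ x, lineDeriv ℝ f x (-(EuclideanSpace.single i 1)) = - pd f i x := by
    intro x
    have hd := (hf.differentiable one_ne_zero) x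
    rw [hd.lineDeriv_eq_fderiv]
    simp [pd]
  rw [integral_congr_ae (Filter.Eventually.of_forall heq)] at this
  rw [integral_neg] at this
  linarith

lemma integ_mul {A g : EuclideanSpace ℝ (Fin n) → ℝ} (hA : Continuous A)
    (hg : Continuous g) (hgc : HasCompactSupport g) :
    Integrable (fun x => A x * g x) :=
  (hA.mul hg).integrable_of_hasCompactSupport (hgc.mul_left)

lemma ibp {f g : EuclideanSpace ℝ (Fin n) → ℝ} (hf : ContDiff ℝ 1 f) (hg : ContDiff ℝ 1 g)
    (h2 : HasCompactSupport g) (i : Fin n) :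
    ∫ x, pd f i x * g x = -∫ x, f x * pd g i x := by
  have hfg : ContDiff ℝ 1 (fun x => f x * g x) := hf.mul hg
  have hfgc : HasCompactSupport (fun x => f x * g x) := h2.mul_left
  have h0 : ∫ x, pd (fun y => f y * g y) i x = 0 := integral_pd_eq_zero hfg hfgc i
  have hpt : ∀ x, pd (fun y => f y * g y) i x = pd f i x * g x + f x * pd g i x := fun x =>
    pd_mul ((hf.differentiable one_ne_zero) x) ((hg.differentiable one_ne_zero) x) i
  rw [integral_congr_ae (Filter.Eventually.of_forall hpt)] at h0
  have i1 : Integrable (fun x => pd f i x * g x) := integ_mul (pd_cont hf i) (hg.continuous) h2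
  have i2 : Integrable (fun x => f x * pd g i x) :=
    integ_mul (hf.continuous) (pd_cont hg i) (pd_hcs h2 i)
  rw [integral_add i1 i2] at h0
  linarith

/-- Move `∂ᵢ` off `g`: `∫ a (∂ᵢg) h = -∫ (∂ᵢa) g h - ∫ a g (∂ᵢh)`. -/
lemma step {a g h : EuclideanSpace ℝ (Fin n) → ℝ} (ha : ContDiff ℝ 1 a)
    (hg : ContDiff ℝ (⊤ : ℕ∞) g) (hgc : HasCompactSupport g)
    (hh : ContDiff ℝ (⊤ : ℕ∞) h) (hhc : HasCompactSupport h) (i : Fin n) :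
    ∫ x, a x * pd g i x * h x =
      -(∫ x, pd a i x * g x * h x) - ∫ x, a x * g x * pd h i x := by
  have hah : ContDiff ℝ 1 (fun x => a x * h x) := ha.mul (hh.of_le (by simp))
  have key := ibp hah (hg.of_le (by simp)) hgc i
  -- key : ∫ pd (a*h) i * g = -∫ (a*h) * pd g i
  have hpt : ∀ x, pd (fun y => a y * h y) i x * g x
      = pd a i x * g x * h x + a x * g x * pd h i x := by
    intro x
    rw [pd_mul ((ha.differentiable one_ne_zero) x) ((hh.differentiable (by simp)) x) i]
    ring
  rw [integral_congr_ae (Filter.Eventually.of_forall hpt)] at key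
  have i1 : Integrable (fun x => pd a i x * g x * h x) := by
    have : Integrable (fun x => (pd a i x * g x) * h x) :=
      integ_mul ((pd_cont ha i).mul (hg.continuous)) (hh.continuous) hhc
    simpa [mul_assoc] using this
  have i2 : Integrable (fun x => a x * g x * pd h i x) := by
    have : Integrable (fun x => (a x * g x) * pd h i x) :=
      integ_mul ((ha.continuous).mul (hg.continuous)) (pd_cont (hh.of_le (by simp)) i)
        (pd_hcs hhc i)
    simpa [mul_assoc] using this
  rw [integral_add i1 i2] at key
  have hswap : ∫ x, a x * h x * pd g i x = ∫ x, a x * pd g i x * h x := by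
    apply integral_congr_ae (Filter.Eventually.of_forall fun x => by ring)
  rw [hswap] at key
  linarith

lemma icongr {f g : EuclideanSpace ℝ (Fin n) → ℝ} (h : ∀ x, f x = g x) :
    ∫ x, f x = ∫ x, g x :=
  integral_congr_ae (Filter.Eventually.of_forall h)

lemma isum2 {F : Fin n → Fin n → EuclideanSpace ℝ (Fin n) → ℝ}
    (h : ∀ k l, Integrable (F k l)) :
    ∫ x, ∑ k, ∑ l, F k l x = ∑ k, ∑ l, ∫ x, F k l x := by
  rw [integral_finset_sum _ fun k _ => integrable_finset_sum _ fun l _ => h k l]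
  exact Finset.sum_congr rfl fun k _ => integral_finset_sum _ fun l _ => h k l

lemma key_identity (a : EuclideanSpace ℝ (Fin n) → ℝ) (ha : ContDiff ℝ 2 a)
    (s : EuclideanSpace ℝ (Fin n) → ℝ) (hs : ContDiff ℝ (⊤ : ℕ∞) s) (hcs : HasCompactSupport s) :
    (∫ x, a x * ∑ k, ∑ l, (pd (pd s k) l x) ^ 2) =
      -(∫ x, ∑ k, ∑ l, pd (pd s k) l x * pd a l x * pd s k x) +
      (∫ x, (∑ l, pd a l x * pd s l x) * (∑ l, pd (pd s l) l x)) +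
      (∫ x, a x * (∑ l, pd (pd s l) l x) ^ 2) := by
  have ha1 : ContDiff ℝ 1 a := ha.of_le one_le_two
  have hsk : ∀ k, ContDiff ℝ (⊤ : ℕ∞) (pd s k) := pd_smooth hs
  have hskc : ∀ k, HasCompactSupport (pd s k) := pd_hcs hcs
  have hskl : ∀ k l, ContDiff ℝ (⊤ : ℕ∞) (pd (pd s k) l) := fun k => pd_smooth (hsk k)
  have hsklc : ∀ k l, HasCompactSupport (pd (pd s k) l) := fun k => pd_hcs (hskc k)
  -- canonical integrands
  set Fa : Fin n → Fin n → EuclideanSpace ℝ (Fin n) → ℝ :=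
    fun k l x => a x * (pd (pd s k) l x * pd (pd s k) l x) with hFa
  set F1 : Fin n → Fin n → EuclideanSpace ℝ (Fin n) → ℝ :=
    fun k l x => pd (pd s k) l x * pd a l x * pd s k x with hF1
  set F2 : Fin n → Fin n → EuclideanSpace ℝ (Fin n) → ℝ :=
    fun k l x => pd a k x * pd s k x * pd (pd s l) l x with hF2
  set F3 : Fin n → Fin n → EuclideanSpace ℝ (Fin n) → ℝ :=
    fun k l x => a x * (pd (pd s k) k x * pd (pd s l) l x) with hF3
  have iFa : ∀ k l, Integrable (Fa k l) := fun k l =>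
    integ_mul ha.continuous ((hskl k l).continuous.mul (hskl k l).continuous)
      ((hsklc k l).mul_left)
  have iF1 : ∀ k l, Integrable (F1 k l) := fun k l =>
    integ_mul ((hskl k l).continuous.mul (pd_cont ha1 l)) (hsk k).continuous (hskc k)
  have iF2 : ∀ k l, Integrable (F2 k l) := fun k l =>
    integ_mul ((pd_cont ha1 k).mul (hsk k).continuous) (hskl l l).continuous (hsklc l l)
  have iF3 : ∀ k l, Integrable (F3 k l) := fun k l =>
    integ_mul ha.continuous ((hskl k k).continuous.mul (hskl l l).continuous)
      ((hsklc l l).mul_left)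
  -- the per-(k,l) identity
  have hkl : ∀ k l, ∫ x, Fa k l x =
      -(∫ x, F1 k l x) + (∫ x, F2 k l x) + (∫ x, F3 k l x) := by
    intro k l
    have hA := step ha1 (hsk k) (hskc k) (hskl k l) (hsklc k l) l
    -- hA : ∫ a * pd (pd s k) l * pd (pd s k) l
    --      = -∫ pd a l * pd s k * pd (pd s k) l - ∫ a * pd s k * pd (pd (pd s k) l) l
    have hB : ∀ x, pd (pd (pd s k) l) l x = pd (pd (pd s l) l) k x := by
      intro x
      have e1 : pd (pd s k) l = pd (pd s l) k := funext (pd_comm hs k l)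
      rw [e1]
      exact pd_comm (pd_smooth hs l) k l x
    have hC := step ha1 (hskl l l) (hsklc l l) (hsk k) (hskc k) k
    -- hC : ∫ a * pd (pd (pd s l) l) k * pd s k
    --      = -∫ pd a k * pd (pd s l) l * pd s k - ∫ a * pd (pd s l) l * pd (pd s k) k
    have e2 : ∫ x, a x * pd s k x * pd (pd (pd s k) l) l x
        = ∫ x, a x * pd (pd (pd s l) l) k x * pd s k x :=
      icongr fun x => by rw [hB x]; ring
    have e3 : ∫ x, Fa k l x = ∫ x, a x * pd (pd s k) l x * pd (pd s k) l x :=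
      icongr fun x => by simp only [hFa]; ring
    have e4 : ∫ x, pd a l x * pd s k x * pd (pd s k) l x = ∫ x, F1 k l x :=
      icongr fun x => by simp only [hF1]; ring
    have e5 : ∫ x, pd a k x * pd (pd s l) l x * pd s k x = ∫ x, F2 k l x :=
      icongr fun x => by simp only [hF2]; ring
    have e6 : ∫ x, a x * pd (pd s l) l x * pd (pd s k) k x = ∫ x, F3 k l x :=
      icongr fun x => by simp only [hF3]; ring
    linarith [hA, e2, hC, e3, e4, e5, e6]
  have main : ∑ k, ∑ l, ∫ x, Fa k l x =
      ∑ k : Fin n, ∑ l : Fin n,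
        (-(∫ x, F1 k l x) + (∫ x, F2 k l x) + (∫ x, F3 k l x)) :=
    Finset.sum_congr rfl fun k _ => Finset.sum_congr rfl fun l _ => hkl k l
  have ea : (∫ x, a x * ∑ k, ∑ l, (pd (pd s k) l x) ^ 2) = ∑ k, ∑ l, ∫ x, Fa k l x := by
    rw [← isum2 iFa]
    exact icongr fun x => by simp only [hFa, Finset.mul_sum, pow_two]
  have e1' : (∫ x, ∑ k, ∑ l, pd (pd s k) l x * pd a l x * pd s k x)
      = ∑ k, ∑ l, ∫ x, F1 k l x := isum2 iF1
  have e2' : (∫ x, (∑ l, pd a l x * pd s l x) * (∑ l, pd (pd s l) l x))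
      = ∑ k, ∑ l, ∫ x, F2 k l x := by
    rw [← isum2 iF2]
    exact icongr fun x => by rw [Finset.sum_mul_sum]
  have e3' : (∫ x, a x * (∑ l, pd (pd s l) l x) ^ 2) = ∑ k, ∑ l, ∫ x, F3 k l x := by
    rw [← isum2 iF3]
    refine icongr fun x => ?_
    rw [pow_two, Finset.sum_mul_sum, Finset.mul_sum]
    exact Finset.sum_congr rfl fun k _ => by rw [Finset.mul_sum]
  rw [ea, e1', e2', e3', main]
  simp [Finset.sum_add_distrib, neg_add_rev, Finset.sum_neg_distrib]

lemma abs_integral_cs (f g : EuclideanSpace ℝ (Fin n) → ℝ)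
    (hff : Integrable (fun x => f x * f x)) (hgg : Integrable (fun x => g x * g x))
    (hfg : Integrable (fun x => f x * g x)) :
    |∫ x, f x * g x| ≤ Real.sqrt (∫ x, f x * f x) * Real.sqrt (∫ x, g x * g x) := by
  set P := ∫ x, f x * g x with hP
  set F := ∫ x, f x * f x with hF
  set G := ∫ x, g x * g x with hG
  have hF0 : 0 ≤ F := integral_nonneg fun x => mul_self_nonneg _
  have hG0 : 0 ≤ G := integral_nonneg fun x => mul_self_nonneg _
  have hq : ∀ t : ℝ, 0 ≤ G * (t * t) + (2 * P) * t + F := by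
    intro t
    have h0 : 0 ≤ ∫ x, (f x + t * g x) * (f x + t * g x) :=
      integral_nonneg fun x => mul_self_nonneg _
    have hexp : (∫ x, (f x + t * g x) * (f x + t * g x))
        = F + 2 * t * P + t * t * G := by
      have e : ∀ x, (f x + t * g x) * (f x + t * g x)
          = f x * f x + (2 * t) * (f x * g x) + (t * t) * (g x * g x) := fun x => by ring
      have iB : Integrable (fun x => (2 * t) * (f x * g x)) := hfg.const_mul _
      have iC : Integrable (fun x => (t * t) * (g x * g x)) := hgg.const_mul _
      have iA : Integrable (fun x => f x * f x + (2 * t) * (f x * g x)) := hff.add iB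
      rw [icongr e, integral_add iA iC, integral_add hff iB, MeasureTheory.integral_const_mul,
        MeasureTheory.integral_const_mul]
    rw [hexp] at h0
    linarith
  have hd : discrim G (2 * P) F ≤ 0 := discrim_le_zero hq
  rw [discrim] at hd
  have hP2 : P ^ 2 ≤ F * G := by nlinarith
  calc |P| = Real.sqrt (P ^ 2) := (Real.sqrt_sq_eq_abs P).symm
    _ ≤ Real.sqrt (F * G) := Real.sqrt_le_sqrt hP2
    _ = Real.sqrt F * Real.sqrt G := Real.sqrt_mul hF0 _

lemma sqrt_integral_add_le (f g : EuclideanSpace ℝ (Fin n) → ℝ)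
    (hff : Integrable (fun x => f x * f x)) (hgg : Integrable (fun x => g x * g x))
    (hfg : Integrable (fun x => f x * g x)) :
    Real.sqrt (∫ x, (f x + g x) * (f x + g x)) ≤
      Real.sqrt (∫ x, f x * f x) + Real.sqrt (∫ x, g x * g x) := by
  set F := ∫ x, f x * f x
  set G := ∫ x, g x * g x
  have hF0 : 0 ≤ F := integral_nonneg fun x => mul_self_nonneg _
  have hG0 : 0 ≤ G := integral_nonneg fun x => mul_self_nonneg _
  have hPle : ∫ x, f x * g x ≤ Real.sqrt F * Real.sqrt G :=
    le_trans (le_abs_self _) (abs_integral_cs f g hff hgg hfg)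
  have hexp : (∫ x, (f x + g x) * (f x + g x)) = F + 2 * (∫ x, f x * g x) + G := by
    have e : ∀ x, (f x + g x) * (f x + g x)
        = f x * f x + 2 * (f x * g x) + g x * g x := fun x => by ring
    have iB : Integrable (fun x => 2 * (f x * g x)) := hfg.const_mul _
    have iA : Integrable (fun x => f x * f x + 2 * (f x * g x)) := hff.add iB
    rw [icongr e, integral_add iA hgg, integral_add hff iB, MeasureTheory.integral_const_mul]
  have h1 : (∫ x, (f x + g x) * (f x + g x)) ≤ (Real.sqrt F + Real.sqrt G) ^ 2 := by
    rw [hexp]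
    have e1 : Real.sqrt F * Real.sqrt F = F := Real.mul_self_sqrt hF0
    have e2 : Real.sqrt G * Real.sqrt G = G := Real.mul_self_sqrt hG0
    nlinarith
  calc Real.sqrt (∫ x, (f x + g x) * (f x + g x))
      ≤ Real.sqrt ((Real.sqrt F + Real.sqrt G) ^ 2) := Real.sqrt_le_sqrt h1
    _ = Real.sqrt F + Real.sqrt G := by
        rw [Real.sqrt_sq (by positivity)]

lemma sum2_sq_bound (T : Fin n → Fin n → ℝ) (b c : Fin n → ℝ) :
    (∑ k, ∑ l, T k l * b l * c k) ^ 2 ≤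
      (∑ k, ∑ l, (T k l) ^ 2) * ((∑ l, (b l) ^ 2) * (∑ l, (c l) ^ 2)) := by
  have e : ∑ k, ∑ l, T k l * b l * c k = ∑ k, (∑ l, T k l * b l) * c k := by
    refine Finset.sum_congr rfl fun k _ => ?_
    rw [Finset.sum_mul]
  rw [e]
  have h1 : (∑ k, (∑ l, T k l * b l) * c k) ^ 2 ≤
      (∑ k, (∑ l, T k l * b l) ^ 2) * (∑ k, (c k) ^ 2) :=
    Finset.sum_mul_sq_le_sq_mul_sq _ _ _
  have h2 : (∑ k, (∑ l, T k l * b l) ^ 2) ≤ (∑ k, ∑ l, (T k l) ^ 2) * (∑ l, (b l) ^ 2) := by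
    rw [Finset.sum_mul]
    exact Finset.sum_le_sum fun k _ => Finset.sum_mul_sq_le_sq_mul_sq _ _ _
  calc (∑ k, (∑ l, T k l * b l) * c k) ^ 2
      ≤ (∑ k, (∑ l, T k l * b l) ^ 2) * (∑ k, (c k) ^ 2) := h1
    _ ≤ ((∑ k, ∑ l, (T k l) ^ 2) * (∑ l, (b l) ^ 2)) * (∑ l, (c l) ^ 2) := by
        apply mul_le_mul_of_nonneg_right h2
        positivity
    _ = (∑ k, ∑ l, (T k l) ^ 2) * ((∑ l, (b l) ^ 2) * (∑ l, (c l) ^ 2)) := by ring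

lemma sum_pd_sq_eq_grad {a : EuclideanSpace ℝ (Fin n) → ℝ} (ha : ContDiff ℝ 2 a)
    (x : EuclideanSpace ℝ (Fin n)) :
    ∑ l, (pd a l x) ^ 2 = ‖gradient a x‖ ^ 2 := by
  have hpd : ∀ l, pd a l x = gradient a x l := by
    intro l
    have : inner ℝ (gradient a x) (EuclideanSpace.single l (1:ℝ)) = fderiv ℝ a x
        (EuclideanSpace.single l (1:ℝ)) := by
      rw [gradient]
      exact InnerProductSpace.toDual_symm_apply
    rw [pd, ← this, real_inner_comm, EuclideanSpace.inner_single_left]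
    simp
  have hn : ‖gradient a x‖ ^ 2 = ∑ l, (gradient a x l) ^ 2 := by
    rw [EuclideanSpace.norm_eq, Real.sq_sqrt (by positivity)]
    refine Finset.sum_congr rfl fun l _ => ?_
    rw [Real.norm_eq_abs, sq_abs]
  rw [hn]
  exact Finset.sum_congr rfl fun l _ => by rw [hpd]

lemma hcs_of_zero_on {f g : EuclideanSpace ℝ (Fin n) → ℝ} (hcs : HasCompactSupport g)
    (h : ∀ x, x ∉ tsupport g → f x = 0) : HasCompactSupport f :=
  hcs.mono' fun x hx => by
    by_contra hxx
    exact hx (h x hxx)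

lemma bound_T1 {a s : EuclideanSpace ℝ (Fin n) → ℝ} (ha : ContDiff ℝ 2 a)
    (hs : ContDiff ℝ (⊤ : ℕ∞) s) (hcs : HasCompactSupport s) {C₀ : ℝ} (hC₀ : 0 ≤ C₀)
    (hb : ∀ x, (∑ l, (pd a l x) ^ 2) * (∑ l, (pd s l x) ^ 2) ≤
      C₀ * (a x * ∑ l, (pd s l x) ^ 2)) :
    |∫ x, ∑ k, ∑ l, pd (pd s k) l x * pd a l x * pd s k x| ≤
      Real.sqrt (∫ x, ∑ k, ∑ l, (pd (pd s k) l x) ^ 2) *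
        (Real.sqrt C₀ * Real.sqrt (∫ x, a x * ∑ l, (pd s l x) ^ 2)) := by
  have ha1 : ContDiff ℝ 1 a := ha.of_le one_le_two
  have hsk : ∀ k, ContDiff ℝ (⊤ : ℕ∞) (pd s k) := pd_smooth hs
  have hskc : ∀ k, HasCompactSupport (pd s k) := pd_hcs hcs
  have hskl : ∀ k l, ContDiff ℝ (⊤ : ℕ∞) (pd (pd s k) l) := fun k => pd_smooth (hsk k)
  have hsklc : ∀ k l, HasCompactSupport (pd (pd s k) l) := fun k => pd_hcs (hskc k)
  have zero1 : ∀ x, x ∉ tsupport s → ∀ k, pd s k x = 0 := fun x hx k => pd_eq_zero hx k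
  have zero2 : ∀ x, x ∉ tsupport s → ∀ k l, pd (pd s k) l x = 0 := fun x hx k l =>
    pd_eq_zero (fun hmem => hx (tsupport_pd_subset k hmem)) l
  set f₁ : EuclideanSpace ℝ (Fin n) → ℝ :=
    fun x => Real.sqrt (∑ k, ∑ l, (pd (pd s k) l x) ^ 2) with hf₁
  set g₁ : EuclideanSpace ℝ (Fin n) → ℝ :=
    fun x => Real.sqrt ((∑ l, (pd a l x) ^ 2) * (∑ l, (pd s l x) ^ 2)) with hg₁
  have contf₁ : Continuous f₁ :=
    Real.continuous_sqrt.comp (continuous_finset_sum _ fun k _ =>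
      continuous_finset_sum _ fun l _ => ((hskl k l).continuous.pow 2))
  have contg₁ : Continuous g₁ :=
    Real.continuous_sqrt.comp (((continuous_finset_sum _ fun l _ =>
      ((pd_cont ha1 l).pow 2)).mul (continuous_finset_sum _ fun l _ =>
      ((hsk l).continuous.pow 2))))
  have hcsf₁ : HasCompactSupport f₁ := hcs_of_zero_on hcs fun x hx => by
    simp [hf₁, zero2 x hx]
  have hcsg₁sq : HasCompactSupport (fun x => g₁ x * g₁ x) := hcs_of_zero_on hcs fun x hx => by
    simp [hg₁, zero1 x hx]
  have ptwise : ∀ x, |∑ k, ∑ l, pd (pd s k) l x * pd a l x * pd s k x| ≤ f₁ x * g₁ x := by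
    intro x
    have h1 := sum2_sq_bound (fun k l => pd (pd s k) l x) (fun l => pd a l x)
      (fun l => pd s l x)
    have h2 : |∑ k, ∑ l, pd (pd s k) l x * pd a l x * pd s k x|
        = Real.sqrt ((∑ k, ∑ l, pd (pd s k) l x * pd a l x * pd s k x) ^ 2) :=
      (Real.sqrt_sq_eq_abs _).symm
    rw [h2]
    calc Real.sqrt ((∑ k, ∑ l, pd (pd s k) l x * pd a l x * pd s k x) ^ 2)
        ≤ Real.sqrt ((∑ k, ∑ l, (pd (pd s k) l x) ^ 2) *
            ((∑ l, (pd a l x) ^ 2) * (∑ l, (pd s l x) ^ 2))) := Real.sqrt_le_sqrt h1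
      _ = f₁ x * g₁ x := Real.sqrt_mul (by positivity) _
  have imain : Integrable (fun x => ∑ k, ∑ l, pd (pd s k) l x * pd a l x * pd s k x) :=
    integrable_finset_sum _ fun k _ => integrable_finset_sum _ fun l _ =>
      integ_mul ((hskl k l).continuous.mul (pd_cont ha1 l)) (hsk k).continuous (hskc k)
  have ifg : Integrable (fun x => f₁ x * g₁ x) :=
    (contf₁.mul contg₁).integrable_of_hasCompactSupport (hcsf₁.mul_right)
  have iff₁ : Integrable (fun x => f₁ x * f₁ x) :=
    (contf₁.mul contf₁).integrable_of_hasCompactSupport (hcsf₁.mul_right)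
  have igg₁ : Integrable (fun x => g₁ x * g₁ x) :=
    (contg₁.mul contg₁).integrable_of_hasCompactSupport hcsg₁sq
  have step1 : |∫ x, ∑ k, ∑ l, pd (pd s k) l x * pd a l x * pd s k x|
      ≤ ∫ x, f₁ x * g₁ x := by
    have h1 := norm_integral_le_integral_norm
      (f := fun x => ∑ k, ∑ l, pd (pd s k) l x * pd a l x * pd s k x) (μ := volume)
    simp only [Real.norm_eq_abs] at h1
    exact h1.trans (integral_mono imain.abs ifg ptwise)
  have step2 : ∫ x, f₁ x * g₁ x ≤ Real.sqrt (∫ x, f₁ x * f₁ x) * Real.sqrt (∫ x, g₁ x * g₁ x) :=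
    le_trans (le_abs_self _) (abs_integral_cs f₁ g₁ iff₁ igg₁ ifg)
  have ef : ∫ x, f₁ x * f₁ x = ∫ x, ∑ k, ∑ l, (pd (pd s k) l x) ^ 2 :=
    icongr fun x => Real.mul_self_sqrt (by positivity)
  have eg : ∫ x, g₁ x * g₁ x = ∫ x, (∑ l, (pd a l x) ^ 2) * (∑ l, (pd s l x) ^ 2) :=
    icongr fun x => Real.mul_self_sqrt (by positivity)
  have hmono : ∫ x, (∑ l, (pd a l x) ^ 2) * (∑ l, (pd s l x) ^ 2)
      ≤ C₀ * ∫ x, a x * ∑ l, (pd s l x) ^ 2 := by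
    rw [← MeasureTheory.integral_const_mul]
    refine integral_mono (by rw [← eg] at *; exact igg₁.congr (Filter.Eventually.of_forall
      fun x => Real.mul_self_sqrt (by positivity))) ?_ hb
    exact (continuous_const.mul (ha.continuous.mul (continuous_finset_sum _ fun l _ =>
      ((hsk l).continuous.pow 2)))).integrable_of_hasCompactSupport
      (hcs_of_zero_on hcs fun x hx => by simp [zero1 x hx])
  have hgle : Real.sqrt (∫ x, g₁ x * g₁ x) ≤
      Real.sqrt C₀ * Real.sqrt (∫ x, a x * ∑ l, (pd s l x) ^ 2) := by
    rw [eg, ← Real.sqrt_mul hC₀]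
    exact Real.sqrt_le_sqrt hmono
  calc |∫ x, ∑ k, ∑ l, pd (pd s k) l x * pd a l x * pd s k x|
      ≤ ∫ x, f₁ x * g₁ x := step1
    _ ≤ Real.sqrt (∫ x, f₁ x * f₁ x) * Real.sqrt (∫ x, g₁ x * g₁ x) := step2
    _ ≤ Real.sqrt (∫ x, f₁ x * f₁ x) *
        (Real.sqrt C₀ * Real.sqrt (∫ x, a x * ∑ l, (pd s l x) ^ 2)) :=
        mul_le_mul_of_nonneg_left hgle (Real.sqrt_nonneg _)
    _ = Real.sqrt (∫ x, ∑ k, ∑ l, (pd (pd s k) l x) ^ 2) *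
        (Real.sqrt C₀ * Real.sqrt (∫ x, a x * ∑ l, (pd s l x) ^ 2)) := by rw [ef]

lemma bound_T2 {a s : EuclideanSpace ℝ (Fin n) → ℝ} (ha : ContDiff ℝ 2 a)
    (hs : ContDiff ℝ (⊤ : ℕ∞) s) (hcs : HasCompactSupport s) {C₀ : ℝ} (hC₀ : 0 ≤ C₀)
    (hb : ∀ x, (∑ l, (pd a l x) ^ 2) * (∑ l, (pd s l x) ^ 2) ≤
      C₀ * (a x * ∑ l, (pd s l x) ^ 2)) :
    |∫ x, (∑ l, pd a l x * pd s l x) * (∑ l, pd (pd s l) l x)| ≤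
      (Real.sqrt C₀ * Real.sqrt (∫ x, a x * ∑ l, (pd s l x) ^ 2)) *
        Real.sqrt (∫ x, (∑ l, pd (pd s l) l x) * (∑ l, pd (pd s l) l x)) := by
  have ha1 : ContDiff ℝ 1 a := ha.of_le one_le_two
  have hsk : ∀ k, ContDiff ℝ (⊤ : ℕ∞) (pd s k) := pd_smooth hs
  have hskc : ∀ k, HasCompactSupport (pd s k) := pd_hcs hcs
  have hskl : ∀ k l, ContDiff ℝ (⊤ : ℕ∞) (pd (pd s k) l) := fun k => pd_smooth (hsk k)
  have hsklc : ∀ k l, HasCompactSupport (pd (pd s k) l) := fun k => pd_hcs (hskc k)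
  have zero1 : ∀ x, x ∉ tsupport s → ∀ k, pd s k x = 0 := fun x hx k => pd_eq_zero hx k
  have zero2 : ∀ x, x ∉ tsupport s → ∀ k l, pd (pd s k) l x = 0 := fun x hx k l =>
    pd_eq_zero (fun hmem => hx (tsupport_pd_subset k hmem)) l
  set f₂ : EuclideanSpace ℝ (Fin n) → ℝ := fun x => ∑ l, pd a l x * pd s l x with hf₂
  set g₂ : EuclideanSpace ℝ (Fin n) → ℝ := fun x => ∑ l, pd (pd s l) l x with hg₂
  have contf₂ : Continuous f₂ := continuous_finset_sum _ fun l _ =>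
    (pd_cont ha1 l).mul (hsk l).continuous
  have contg₂ : Continuous g₂ := continuous_finset_sum _ fun l _ => (hskl l l).continuous
  have hcsf₂ : HasCompactSupport f₂ := hcs_of_zero_on hcs fun x hx => by
    simp [hf₂, zero1 x hx]
  have hcsg₂ : HasCompactSupport g₂ := hcs_of_zero_on hcs fun x hx => by
    simp [hg₂, zero2 x hx]
  have iff₂ : Integrable (fun x => f₂ x * f₂ x) :=
    (contf₂.mul contf₂).integrable_of_hasCompactSupport (hcsf₂.mul_right)
  have igg₂ : Integrable (fun x => g₂ x * g₂ x) :=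
    (contg₂.mul contg₂).integrable_of_hasCompactSupport (hcsg₂.mul_right)
  have ifg₂ : Integrable (fun x => f₂ x * g₂ x) :=
    (contf₂.mul contg₂).integrable_of_hasCompactSupport (hcsf₂.mul_right)
  have hcs₂ := abs_integral_cs f₂ g₂ iff₂ igg₂ ifg₂
  have hffle : ∫ x, f₂ x * f₂ x ≤ C₀ * ∫ x, a x * ∑ l, (pd s l x) ^ 2 := by
    rw [← MeasureTheory.integral_const_mul]
    refine integral_mono iff₂ ?_ fun x => ?_
    · exact (continuous_const.mul (ha.continuous.mul (continuous_finset_sum _ fun l _ =>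
        ((hsk l).continuous.pow 2)))).integrable_of_hasCompactSupport
        (hcs_of_zero_on hcs fun x hx => by simp [zero1 x hx])
    · have h1 : f₂ x * f₂ x = (∑ l, pd a l x * pd s l x) ^ 2 := by rw [hf₂]; ring
      rw [h1]
      exact le_trans (Finset.sum_mul_sq_le_sq_mul_sq _ _ _) (hb x)
  have hfle : Real.sqrt (∫ x, f₂ x * f₂ x) ≤
      Real.sqrt C₀ * Real.sqrt (∫ x, a x * ∑ l, (pd s l x) ^ 2) := by
    rw [← Real.sqrt_mul hC₀]
    exact Real.sqrt_le_sqrt hffle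
  calc |∫ x, f₂ x * g₂ x|
      ≤ Real.sqrt (∫ x, f₂ x * f₂ x) * Real.sqrt (∫ x, g₂ x * g₂ x) := hcs₂
    _ ≤ (Real.sqrt C₀ * Real.sqrt (∫ x, a x * ∑ l, (pd s l x) ^ 2)) *
        Real.sqrt (∫ x, g₂ x * g₂ x) :=
        mul_le_mul_of_nonneg_right hfle (Real.sqrt_nonneg _)


/-- the integration-by-parts identity
`∫ a|D²s|² = −∫ D²s(∇a,∇s) + ∫(∇a·∇s)Δs + ∫ a|Δs|²` for `s = u + w`, and the resulting
estimate `∫ a|D²s|² ≤ C₀'(‖Δu‖₂+‖Δw‖₂)(∫ a|∇s|²)^{1/2} + ∫ a|Δs|²`. -/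
theorem stmt_12 {n : ℕ} (Ω : Set (EuclideanSpace ℝ (Fin n)))
    (hΩ : IsOpen Ω) (hΩb : Bornology.IsBounded Ω)
    (a : EuclideanSpace ℝ (Fin n) → ℝ) (ha : ContDiff ℝ 2 a) (ha0 : ∀ x, 0 ≤ a x)
    (C₀ : ℝ) (hC₀ : 0 < C₀)
    (hgrada : ∀ x ∈ Ω, ‖gradient a x‖ ^ 2 ≤ C₀ * a x) :
    ∃ C₀' : ℝ, 0 < C₀' ∧
      ∀ u w : EuclideanSpace ℝ (Fin n) → ℝ,
        ContDiff ℝ (⊤ : ℕ∞) u → HasCompactSupport u → tsupport u ⊆ Ω →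
        ContDiff ℝ (⊤ : ℕ∞) w → HasCompactSupport w → tsupport w ⊆ Ω →
        ((∫ x in Ω, a x * ∑ k, ∑ l, (pd (pd (fun y => u y + w y) k) l x) ^ 2) =
          -(∫ x in Ω, ∑ k, ∑ l, pd (pd (fun y => u y + w y) k) l x * pd a l x *
              pd (fun y => u y + w y) k x) +
          (∫ x in Ω, (∑ l, pd a l x * pd (fun y => u y + w y) l x) *
              lap (fun y => u y + w y) x) +
          (∫ x in Ω, a x * (lap (fun y => u y + w y) x) ^ 2)) ∧
        (∫ x in Ω, a x * ∑ k, ∑ l, (pd (pd (fun y => u y + w y) k) l x) ^ 2) ≤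
          C₀' * (Real.sqrt (∫ x in Ω, (lap u x) ^ 2) +
              Real.sqrt (∫ x in Ω, (lap w x) ^ 2)) *
            Real.sqrt (∫ x in Ω, a x * ∑ l, (pd (fun y => u y + w y) l x) ^ 2) +
          (∫ x in Ω, a x * (lap (fun y => u y + w y) x) ^ 2) := by
  refine ⟨2 * Real.sqrt C₀, mul_pos two_pos (Real.sqrt_pos.mpr hC₀), ?_⟩
  intro u w hu hcu hsu hw hcw hsw
  set s : EuclideanSpace ℝ (Fin n) → ℝ := fun y => u y + w y with hsdef
  have hs : ContDiff ℝ (⊤ : ℕ∞) s := hu.add hw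
  have hcs : HasCompactSupport s := hcu.add hcw
  have hsupΩ : tsupport s ⊆ Ω := by
    have h1 : Function.support s ⊆ tsupport u ∪ tsupport w := by
      intro x hx
      by_contra hmem
      simp only [Set.mem_union, not_or] at hmem
      have hu0 : u x = 0 := image_eq_zero_of_notMem_tsupport hmem.1
      have hw0 : w x = 0 := image_eq_zero_of_notMem_tsupport hmem.2
      exact hx (by simp [hsdef, hu0, hw0])
    exact (closure_minimal h1 ((isClosed_tsupport u).union (isClosed_tsupport w))).trans
      (Set.union_subset hsu hsw)
  have hnot : ∀ x, x ∉ Ω → x ∉ tsupport s := fun x hx hmem => hx (hsupΩ hmem)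
  have zero1 : ∀ x, x ∉ tsupport s → ∀ k, pd s k x = 0 := fun x hx k => pd_eq_zero hx k
  have zero2 : ∀ x, x ∉ tsupport s → ∀ k l, pd (pd s k) l x = 0 := fun x hx k l =>
    pd_eq_zero (fun hmem => hx (tsupport_pd_subset k hmem)) l
  have zerou : ∀ x, x ∉ Ω → ∀ k l, pd (pd u k) l x = 0 := fun x hx k l =>
    pd_eq_zero (fun hmem => hx (hsu (tsupport_pd_subset k hmem))) l
  have zerow : ∀ x, x ∉ Ω → ∀ k l, pd (pd w k) l x = 0 := fun x hx k l =>
    pd_eq_zero (fun hmem => hx (hsw (tsupport_pd_subset k hmem))) l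
  simp only [lap]
  have E1 : (∫ x in Ω, a x * ∑ k, ∑ l, (pd (pd s k) l x) ^ 2)
      = ∫ x, a x * ∑ k, ∑ l, (pd (pd s k) l x) ^ 2 :=
    setIntegral_eq_integral_of_forall_compl_eq_zero fun x hx => by
      simp [zero2 x (hnot x hx)]
  have E2 : (∫ x in Ω, ∑ k, ∑ l, pd (pd s k) l x * pd a l x * pd s k x)
      = ∫ x, ∑ k, ∑ l, pd (pd s k) l x * pd a l x * pd s k x :=
    setIntegral_eq_integral_of_forall_compl_eq_zero fun x hx => by
      simp [zero2 x (hnot x hx)]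
  have E3 : (∫ x in Ω, (∑ l, pd a l x * pd s l x) * ∑ i, pd (pd s i) i x)
      = ∫ x, (∑ l, pd a l x * pd s l x) * ∑ i, pd (pd s i) i x :=
    setIntegral_eq_integral_of_forall_compl_eq_zero fun x hx => by
      simp [zero1 x (hnot x hx)]
  have E4 : (∫ x in Ω, a x * (∑ i, pd (pd s i) i x) ^ 2)
      = ∫ x, a x * (∑ i, pd (pd s i) i x) ^ 2 :=
    setIntegral_eq_integral_of_forall_compl_eq_zero fun x hx => by
      simp [zero2 x (hnot x hx)]
  have E5 : (∫ x in Ω, (∑ i, pd (pd u i) i x) ^ 2)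
      = ∫ x, (∑ i, pd (pd u i) i x) ^ 2 :=
    setIntegral_eq_integral_of_forall_compl_eq_zero fun x hx => by
      simp [zerou x hx]
  have E6 : (∫ x in Ω, (∑ i, pd (pd w i) i x) ^ 2)
      = ∫ x, (∑ i, pd (pd w i) i x) ^ 2 :=
    setIntegral_eq_integral_of_forall_compl_eq_zero fun x hx => by
      simp [zerow x hx]
  have E7 : (∫ x in Ω, a x * ∑ l, (pd s l x) ^ 2) = ∫ x, a x * ∑ l, (pd s l x) ^ 2 :=
    setIntegral_eq_integral_of_forall_compl_eq_zero fun x hx => by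
      simp [zero1 x (hnot x hx)]
  rw [E1, E2, E3, E4, E5, E6, E7]
  have hid := key_identity a ha s hs hcs
  constructor
  · exact hid
  -- the estimate
  have hb : ∀ x, (∑ l, (pd a l x) ^ 2) * (∑ l, (pd s l x) ^ 2) ≤
      C₀ * (a x * ∑ l, (pd s l x) ^ 2) := by
    intro x
    by_cases hx : x ∈ Ω
    · have h1 : (∑ l, (pd a l x) ^ 2) ≤ C₀ * a x := by
        rw [sum_pd_sq_eq_grad ha x]; exact hgrada x hx
      have h2 : (0:ℝ) ≤ ∑ l, (pd s l x) ^ 2 := by positivity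
      calc (∑ l, (pd a l x) ^ 2) * (∑ l, (pd s l x) ^ 2)
          ≤ (C₀ * a x) * (∑ l, (pd s l x) ^ 2) := mul_le_mul_of_nonneg_right h1 h2
        _ = C₀ * (a x * ∑ l, (pd s l x) ^ 2) := by ring
    · simp [zero1 x (hnot x hx)]
  have hT1 := bound_T1 ha hs hcs hC₀.le hb
  have hT2 := bound_T2 ha hs hcs hC₀.le hb
  have hunw := key_identity (fun _ => (1:ℝ)) contDiff_const s hs hcs
  simp only [pd_const, zero_mul, mul_zero, Finset.sum_const_zero, integral_zero, neg_zero,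
    zero_add, one_mul] at hunw
  -- hunw : ∫ ΣΣ T² = ∫ (Σ v)²
  rw [hunw] at hT1
  have eD : (∫ x, (∑ l, pd (pd s l) l x) * (∑ l, pd (pd s l) l x))
      = ∫ x, (∑ l, pd (pd s l) l x) ^ 2 := icongr fun x => by ring
  rw [eD] at hT2
  -- Minkowski
  have hadd : ∀ x, (∑ l, pd (pd s l) l x)
      = (∑ i, pd (pd u i) i x) + (∑ i, pd (pd w i) i x) := by
    intro x
    rw [← Finset.sum_add_distrib]
    refine Finset.sum_congr rfl fun l _ => ?_
    have e1 : pd s l = fun y => pd u l y + pd w l y := funext fun y =>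
      pd_add ((hu.differentiable (by simp)) y) ((hw.differentiable (by simp)) y) l
    rw [e1]
    exact pd_add (((pd_smooth hu l).differentiable (by simp)) x)
      (((pd_smooth hw l).differentiable (by simp)) x) l
  have contlu : Continuous (fun x => ∑ i, pd (pd u i) i x) :=
    continuous_finset_sum _ fun i _ => (pd_smooth (pd_smooth hu i) i).continuous
  have contlw : Continuous (fun x => ∑ i, pd (pd w i) i x) :=
    continuous_finset_sum _ fun i _ => (pd_smooth (pd_smooth hw i) i).continuous
  have hcslu : HasCompactSupport (fun x => ∑ i, pd (pd u i) i x) :=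
    hcs_of_zero_on hcu fun x hx => by
      have : ∀ i, pd (pd u i) i x = 0 := fun i =>
        pd_eq_zero (fun hmem => hx (tsupport_pd_subset i hmem)) i
      simp [this]
  have hcslw : HasCompactSupport (fun x => ∑ i, pd (pd w i) i x) :=
    hcs_of_zero_on hcw fun x hx => by
      have : ∀ i, pd (pd w i) i x = 0 := fun i =>
        pd_eq_zero (fun hmem => hx (tsupport_pd_subset i hmem)) i
      simp [this]
  have iuu : Integrable (fun x => (∑ i, pd (pd u i) i x) * (∑ i, pd (pd u i) i x)) :=
    (contlu.mul contlu).integrable_of_hasCompactSupport hcslu.mul_right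
  have iww : Integrable (fun x => (∑ i, pd (pd w i) i x) * (∑ i, pd (pd w i) i x)) :=
    (contlw.mul contlw).integrable_of_hasCompactSupport hcslw.mul_right
  have iuw : Integrable (fun x => (∑ i, pd (pd u i) i x) * (∑ i, pd (pd w i) i x)) :=
    (contlu.mul contlw).integrable_of_hasCompactSupport hcslu.mul_right
  have hmink : Real.sqrt (∫ x, (∑ l, pd (pd s l) l x) ^ 2)
      ≤ Real.sqrt (∫ x, (∑ i, pd (pd u i) i x) ^ 2)
        + Real.sqrt (∫ x, (∑ i, pd (pd w i) i x) ^ 2) := by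
    have e : (∫ x, (∑ l, pd (pd s l) l x) ^ 2)
        = ∫ x, ((∑ i, pd (pd u i) i x) + (∑ i, pd (pd w i) i x))
            * ((∑ i, pd (pd u i) i x) + (∑ i, pd (pd w i) i x)) :=
      icongr fun x => by rw [hadd x]; ring
    have eu : (∫ x, (∑ i, pd (pd u i) i x) * (∑ i, pd (pd u i) i x))
        = ∫ x, (∑ i, pd (pd u i) i x) ^ 2 := icongr fun x => by ring
    have ew : (∫ x, (∑ i, pd (pd w i) i x) * (∑ i, pd (pd w i) i x))
        = ∫ x, (∑ i, pd (pd w i) i x) ^ 2 := icongr fun x => by ring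
    rw [e, ← eu, ← ew]
    exact sqrt_integral_add_le _ _ iuu iww iuw
  have hQ0 : (0:ℝ) ≤ Real.sqrt C₀ * Real.sqrt (∫ x, a x * ∑ l, (pd s l x) ^ 2) := by
    positivity
  have hfin := mul_le_mul_of_nonneg_right hmink hQ0
  have habs1 := neg_le_abs (∫ x, ∑ k, ∑ l, pd (pd s k) l x * pd a l x * pd s k x)
  have habs2 := le_abs_self (∫ x, (∑ l, pd a l x * pd s l x) * (∑ l, pd (pd s l) l x))
  linarith [hid, hT1, hT2, hfin, habs1, habs2]
end

section
/- Let 𝒜 be the generator of the coupled plate semigroup with localized damping and assume c ≠ d. If μ ∈ ℝ, μ ≠ 0, and (u₁,u₂,v₁,v₂) ∈ D(𝒜) satisfies 𝒜(u₁,u₂,v₁,v₂) = iμ(u₁,u₂,v₁,v₂), and moreover the damping vanishes on the solution, i.e. a∇(v₁+v₂) = 0 in Ω with a ≥ a₀ > 0 on an open set ω, then the partial derivatives w¹_j = ∂_{x_j}u₁ and w²_j = ∂_{x_j}u₂ satisfy the system μ²w¹_j − dΔ²w¹_j = 0, μ²w²_j − cΔ²w²_j = 0 in Ω and w¹_j +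 w²_j = 0 in ω, and consequently Δ²w^i_j = 0 in ω and hence w^i_j = 0 in ω for i = 1,2. -/
open Complex

/-- Partial derivative (complex-valued) in the `i`-th coordinate direction. -/
noncomputable def pdC {n : ℕ} (f : EuclideanSpace ℝ (Fin n) → ℂ) (i : Fin n) :
    EuclideanSpace ℝ (Fin n) → ℂ :=
  fun x => fderiv ℝ f x (EuclideanSpace.single i 1)

/-- Laplacian (complex-valued). -/
noncomputable def lapC {n : ℕ} (f : EuclideanSpace ℝ (Fin n) → ℂ) :
    EuclideanSpace ℝ (Fin n) → ℂ :=
  fun x => ∑ i, pdC (pdC f i) i x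

/-- Bilaplacian `Δ²` (complex-valued). -/
noncomputable def bilapC {n : ℕ} (f : EuclideanSpace ℝ (Fin n) → ℂ) :
    EuclideanSpace ℝ (Fin n) → ℂ :=
  lapC (lapC f)

section Helpers

variable {n : ℕ} {f g : EuclideanSpace ℝ (Fin n) → ℂ}

lemma contDiff_pdC (hf : ContDiff ℝ (⊤ : ℕ∞) f) (i : Fin n) : ContDiff ℝ (⊤ : ℕ∞) (pdC f i) := by
  have h := hf.fderiv_right (m := (⊤ : ℕ∞)) (by simp)
  exact (ContinuousLinearMap.apply ℝ ℂ (EuclideanSpace.single i 1)).contDiff.comp h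

lemma contDiff_lapC (hf : ContDiff ℝ (⊤ : ℕ∞) f) : ContDiff ℝ (⊤ : ℕ∞) (lapC f) := by
  unfold lapC
  exact ContDiff.sum fun i _ => contDiff_pdC (contDiff_pdC hf i) i

lemma contDiff_bilapC (hf : ContDiff ℝ (⊤ : ℕ∞) f) : ContDiff ℝ (⊤ : ℕ∞) (bilapC f) :=
  contDiff_lapC (contDiff_lapC hf)

lemma pdC_const_mul (hf : Differentiable ℝ f) (b : ℂ) (i : Fin n)
    (x : EuclideanSpace ℝ (Fin n)) :
    pdC (fun y => b * f y) i x = b * pdC f i x := by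
  unfold pdC
  rw [fderiv_const_mul (hf x)]
  simp

lemma pdC_eqOn {s : Set (EuclideanSpace ℝ (Fin n))} (hs : IsOpen s)
    (hfg : Set.EqOn f g s) (i : Fin n) : Set.EqOn (pdC f i) (pdC g i) s := by
  intro x hx
  unfold pdC
  rw [Filter.EventuallyEq.fderiv_eq (hfg.eventuallyEq_of_mem (hs.mem_nhds hx))]

lemma lapC_eqOn {s : Set (EuclideanSpace ℝ (Fin n))} (hs : IsOpen s)
    (hfg : Set.EqOn f g s) : Set.EqOn (lapC f) (lapC g) s := by
  intro x hx
  unfold lapC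
  exact Finset.sum_congr rfl fun i _ => pdC_eqOn hs (pdC_eqOn hs hfg i) i hx

lemma bilapC_eqOn {s : Set (EuclideanSpace ℝ (Fin n))} (hs : IsOpen s)
    (hfg : Set.EqOn f g s) : Set.EqOn (bilapC f) (bilapC g) s :=
  lapC_eqOn hs (lapC_eqOn hs hfg)

lemma fderiv_fderiv_apply (hf : ContDiff ℝ (⊤ : ℕ∞) f) (v w : EuclideanSpace ℝ (Fin n))
    (x : EuclideanSpace ℝ (Fin n)) :
    fderiv ℝ (fun y => fderiv ℝ f y v) x w = fderiv ℝ (fderiv ℝ f) x w v := by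
  have hdf : DifferentiableAt ℝ (fderiv ℝ f) x :=
    ((hf.fderiv_right (m := (⊤ : ℕ∞)) (by simp)).differentiable (by simp)).differentiableAt
  rw [fderiv_clm_apply hdf (differentiableAt_const v)]
  simp

lemma pdC_comm (hf : ContDiff ℝ (⊤ : ℕ∞) f) (i j : Fin n) (x : EuclideanSpace ℝ (Fin n)) :
    pdC (pdC f i) j x = pdC (pdC f j) i x := by
  have hsymm : IsSymmSndFDerivAt ℝ f x :=
    hf.contDiffAt.isSymmSndFDerivAt (by rw [minSmoothness_of_isRCLikeNormedField]; exact le_trans (le_of_eq (by norm_cast)) (WithTop.coe_le_coe.mpr (le_top : (2 : ℕ∞) ≤ ⊤)))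
  unfold pdC
  rw [fderiv_fderiv_apply hf _ _ x, fderiv_fderiv_apply hf _ _ x]
  exact hsymm _ _

lemma pdC_sum {ι : Type*} (s : Finset ι) (F : ι → EuclideanSpace ℝ (Fin n) → ℂ)
    (hF : ∀ i ∈ s, Differentiable ℝ (F i)) (j : Fin n) (x : EuclideanSpace ℝ (Fin n)) :
    pdC (fun y => ∑ i ∈ s, F i y) j x = ∑ i ∈ s, pdC (F i) j x := by
  unfold pdC
  rw [fderiv_fun_sum fun i hi => (hF i hi).differentiableAt]
  simp

lemma pdC_lapC (hf : ContDiff ℝ (⊤ : ℕ∞) f) (j : Fin n) (x : EuclideanSpace ℝ (Fin n)) :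
    pdC (lapC f) j x = lapC (pdC f j) x := by
  unfold lapC
  rw [pdC_sum _ _ (fun i _ => (contDiff_pdC (contDiff_pdC hf i) i).differentiable (by simp)) j x]
  refine Finset.sum_congr rfl fun i _ => ?_
  have h1 : pdC (pdC (pdC f i) i) j x = pdC (pdC (pdC f i) j) i x :=
    pdC_comm (contDiff_pdC hf i) i j x
  have h2 : pdC (pdC f i) j = pdC (pdC f j) i := funext fun y => pdC_comm hf i j y
  rw [h1, h2]

lemma pdC_bilapC (hf : ContDiff ℝ (⊤ : ℕ∞) f) (j : Fin n) (x : EuclideanSpace ℝ (Fin n)) :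
    pdC (bilapC f) j x = bilapC (pdC f j) x := by
  unfold bilapC
  rw [pdC_lapC (contDiff_lapC hf) j x]
  have h : pdC (lapC f) j = lapC (pdC f j) := funext fun y => pdC_lapC hf j y
  rw [h]

lemma lapC_const_mul (hf : ContDiff ℝ (⊤ : ℕ∞) f) (b : ℂ) (x : EuclideanSpace ℝ (Fin n)) :
    lapC (fun y => b * f y) x = b * lapC f x := by
  unfold lapC
  rw [Finset.mul_sum]
  refine Finset.sum_congr rfl fun i _ => ?_
  have h1 : pdC (fun y => b * f y) i = fun y => b * pdC f i y :=
    funext fun y => pdC_const_mul (hf.differentiable (by simp)) b i y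
  rw [h1, pdC_const_mul ((contDiff_pdC hf i).differentiable (by simp)) b i x]

lemma bilapC_const_mul (hf : ContDiff ℝ (⊤ : ℕ∞) f) (b : ℂ) (x : EuclideanSpace ℝ (Fin n)) :
    bilapC (fun y => b * f y) x = b * bilapC f x := by
  unfold bilapC
  have h1 : lapC (fun y => b * f y) = fun y => b * lapC f y :=
    funext fun y => lapC_const_mul hf b y
  rw [h1, lapC_const_mul (contDiff_lapC hf) b x]


end Helpers

/-- the algebraic eigenfunction step in the proof of strong stability:
the derivatives `w^i_j = ∂_j u_i` solve the differentiated eigenvalue system, sum to zero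
on `ω`, are biharmonic on `ω`, and hence vanish on `ω`. -/
theorem stmt_15 {n : ℕ} (Ω ω : Set (EuclideanSpace ℝ (Fin n)))
    (hΩ : IsOpen Ω) (hω : IsOpen ω) (hsub : ω ⊆ Ω)
    (c d a₀ : ℝ) (hc : 0 < c) (hd : 0 < d) (hcd : c ≠ d) (ha₀ : 0 < a₀)
    (μ : ℝ) (hμ : μ ≠ 0)
    (a : EuclideanSpace ℝ (Fin n) → ℝ) (ha : ∀ x ∈ ω, a₀ ≤ a x)
    (u₁ u₂ v₁ v₂ : EuclideanSpace ℝ (Fin n) → ℂ)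
    (hu₁ : ContDiff ℝ (⊤ : ℕ∞) u₁) (hu₂ : ContDiff ℝ (⊤ : ℕ∞) u₂)
    (hv₁ : ∀ x, v₁ x = Complex.I * (μ : ℂ) * u₁ x)
    (hv₂ : ∀ x, v₂ x = Complex.I * (μ : ℂ) * u₂ x)
    (heq1 : ∀ x ∈ Ω, ((μ : ℂ) ^ 2) * u₁ x = (d : ℂ) * bilapC u₁ x)
    (heq2 : ∀ x ∈ Ω, ((μ : ℂ) ^ 2) * u₂ x = (c : ℂ) * bilapC u₂ x)
    (hdamp : ∀ x ∈ Ω, ∀ i, (a x : ℂ) * (pdC v₁ i x + pdC v₂ i x) = 0) :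
    ∀ j : Fin n,
      (∀ x ∈ Ω, ((μ : ℂ) ^ 2) * pdC u₁ j x = (d : ℂ) * bilapC (pdC u₁ j) x) ∧
      (∀ x ∈ Ω, ((μ : ℂ) ^ 2) * pdC u₂ j x = (c : ℂ) * bilapC (pdC u₂ j) x) ∧
      (∀ x ∈ ω, pdC u₁ j x + pdC u₂ j x = 0) ∧
      (∀ x ∈ ω, bilapC (pdC u₁ j) x = 0 ∧ bilapC (pdC u₂ j) x = 0) ∧
      (∀ x ∈ ω, pdC u₁ j x = 0 ∧ pdC u₂ j x = 0) := by
  intro j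
  have hμC : ((μ : ℂ)) ≠ 0 := Complex.ofReal_ne_zero.mpr hμ
  have hμ2 : ((μ : ℂ) ^ 2) ≠ 0 := pow_ne_zero _ hμC
  -- Part 1
  have h1Ω : ∀ x ∈ Ω, ((μ : ℂ) ^ 2) * pdC u₁ j x = (d : ℂ) * bilapC (pdC u₁ j) x := by
    intro x hx
    have heqOn : Set.EqOn (fun y => ((μ : ℂ) ^ 2) * u₁ y) (fun y => (d : ℂ) * bilapC u₁ y) Ω :=
      fun y hy => heq1 y hy
    have h := pdC_eqOn hΩ heqOn j hx
    rw [pdC_const_mul (hu₁.differentiable (by simp)) _ j x,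
        pdC_const_mul ((contDiff_bilapC hu₁).differentiable (by simp)) _ j x,
        pdC_bilapC hu₁ j x] at h
    exact h
  have h2Ω : ∀ x ∈ Ω, ((μ : ℂ) ^ 2) * pdC u₂ j x = (c : ℂ) * bilapC (pdC u₂ j) x := by
    intro x hx
    have heqOn : Set.EqOn (fun y => ((μ : ℂ) ^ 2) * u₂ y) (fun y => (c : ℂ) * bilapC u₂ y) Ω :=
      fun y hy => heq2 y hy
    have h := pdC_eqOn hΩ heqOn j hx
    rw [pdC_const_mul (hu₂.differentiable (by simp)) _ j x,
        pdC_const_mul ((contDiff_bilapC hu₂).differentiable (by simp)) _ j x,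
        pdC_bilapC hu₂ j x] at h
    exact h
  -- Part 2 : sum vanishes on ω
  have hsum : ∀ x ∈ ω, pdC u₁ j x + pdC u₂ j x = 0 := by
    intro x hx
    have haC : ((a x : ℂ)) ≠ 0 :=
      Complex.ofReal_ne_zero.mpr (ne_of_gt (lt_of_lt_of_le ha₀ (ha x hx)))
    have h0 : pdC v₁ j x + pdC v₂ j x = 0 :=
      (mul_eq_zero.mp (hdamp x (hsub hx) j)).resolve_left haC
    have hv₁' : v₁ = fun y => (Complex.I * (μ : ℂ)) * u₁ y := funext fun y => hv₁ y
    have hv₂' : v₂ = fun y => (Complex.I * (μ : ℂ)) * u₂ y := funext fun y => hv₂ y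
    rw [hv₁', hv₂', pdC_const_mul (hu₁.differentiable (by simp)) _ j x,
        pdC_const_mul (hu₂.differentiable (by simp)) _ j x, ← mul_add] at h0
    have hIμ : (Complex.I * (μ : ℂ)) ≠ 0 := mul_ne_zero Complex.I_ne_zero hμC
    exact (mul_eq_zero.mp h0).resolve_left hIμ
  -- relation between bilaplacians on ω
  have hw2 : Set.EqOn (pdC u₂ j) (fun y => (-1 : ℂ) * pdC u₁ j y) ω := by
    intro y hy
    have := hsum y hy
    simp only
    linear_combination this
  have hB2 : ∀ x ∈ ω, bilapC (pdC u₂ j) x = -(bilapC (pdC u₁ j) x) := by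
    intro x hx
    rw [bilapC_eqOn hω hw2 hx, bilapC_const_mul (contDiff_pdC hu₁ j) _ x]
    ring
  have hBzero : ∀ x ∈ ω, bilapC (pdC u₁ j) x = 0 := by
    intro x hx
    have e1 := h1Ω x (hsub hx)
    have e2 := h2Ω x (hsub hx)
    have hw2x : pdC u₂ j x = -(pdC u₁ j x) := by linear_combination hsum x hx
    rw [hw2x, hB2 x hx] at e2
    -- e1 : μ² w1 = d B ; e2 : μ² (-w1) = c (-B)
    have hdc : ((d : ℂ) - (c : ℂ)) ≠ 0 := by
      simp only [← Complex.ofReal_sub, Complex.ofReal_ne_zero]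
      exact sub_ne_zero.mpr (Ne.symm hcd)
    have : ((d : ℂ) - (c : ℂ)) * bilapC (pdC u₁ j) x = 0 := by linear_combination -e1 - e2
    exact (mul_eq_zero.mp this).resolve_left hdc
  have hzero : ∀ x ∈ ω, pdC u₁ j x = 0 := by
    intro x hx
    have e1 := h1Ω x (hsub hx)
    rw [hBzero x hx, mul_zero] at e1
    exact (mul_eq_zero.mp e1).resolve_left hμ2
  refine ⟨h1Ω, h2Ω, hsum, fun x hx => ⟨hBzero x hx, ?_⟩, fun x hx => ⟨hzero x hx, ?_⟩⟩
  · rw [hB2 x hx, hBzero x hx, neg_zero]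
  · have := hsum x hx
    rw [hzero x hx, zero_add] at this
    exact this
end
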